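/- Let {G_β^α : α, β ∈ ℤ} be a bidirect system of complex vector spaces: for each fixed α the maps π : G_{β'}^α → G_β^α (β ≤ β') form an inverse system in the lower index, for each fixed β the maps ι : G_β^α → G_β^{α'} (α ≤ α') form a direct system in the upper index, and all squares formed by the maps π and ι commute. Let κ : colim_α lim_β G_β^α → lim_β colim_α G_β^α be the canonical interchange map. If all the direct-system maps ι are injective, then κ is injective. -/

import Mathlib

/-- A bidirect system of complex vector spaces indexed by `ℤ`: for each fixed lower index `β`
a direct system in the upper index `α`, for each fixed `α` an inverse system in `β`, with all
squares commuting. -/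
structure BidirectSystem where
  /-- the spaces `G_β^α` (first index `α`, second index `β`) -/
  G : ℤ → ℤ → Type
  [acg : ∀ α β, AddCommGroup (G α β)]
  [mod : ∀ α β, Module ℂ (G α β)]
  /-- the direct-system maps raising the upper index -/
  ι : ∀ {α α' : ℤ}, α ≤ α' → ∀ β, G α β →ₗ[ℂ] G α' β
  /-- the inverse-system maps lowering the lower index -/
  π : ∀ (α : ℤ) {β β' : ℤ}, β ≤ β' → G α β' →ₗ[ℂ] G α β
  ι_id : ∀ (α β : ℤ) (x : G α β), ι (le_refl α) β x = x
  ι_comp : ∀ {α α' α'' : ℤ} (h : α ≤ α') (h' : α' ≤ α'') (β : ℤ) (x : G α β),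
    ι h' β (ι h β x) = ι (h.trans h') β x
  π_id : ∀ (α β : ℤ) (x : G α β), π α (le_refl β) x = x
  π_comp : ∀ (α : ℤ) {β β' β'' : ℤ} (h : β ≤ β') (h' : β' ≤ β'') (x : G α β''),
    π α h (π α h' x) = π α (h.trans h') x
  square : ∀ {α α' : ℤ} (h : α ≤ α') {β β' : ℤ} (h' : β ≤ β') (x : G α β'),
    ι h β (π α h' x) = π α' h' (ι h β' x)

attribute [instance] BidirectSystem.acg BidirectSystem.mod

namespace BidirectSystem

variable (S : BidirectSystem)

/-- The direct system of `G_β^•` at fixed lower index `β`. -/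
def fam (β : ℤ) : ∀ (a b : ℤ), a ≤ b → S.G a β →ₗ[ℂ] S.G b β := fun _ _ h => S.ι h β

/-- `colim_α G_β^α`. -/
def colimUpper (β : ℤ) : Type := Module.DirectLimit (fun α => S.G α β) (S.fam β)

noncomputable instance (β : ℤ) : AddCommGroup (S.colimUpper β) :=
  inferInstanceAs (AddCommGroup (Module.DirectLimit _ _))

noncomputable instance (β : ℤ) : Module ℂ (S.colimUpper β) :=
  inferInstanceAs (Module ℂ (Module.DirectLimit _ _))

/-- The canonical map `G_β^α → colim_α G_β^α`. -/
noncomputable def toColim (α β : ℤ) : S.G α β →ₗ[ℂ] S.colimUpper β :=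
  Module.DirectLimit.of ℂ ℤ (fun α => S.G α β) (S.fam β) α

/-- `lim_β G_β^α`: the coherent families in the product. -/
def lowerLim (α : ℤ) : Submodule ℂ (∀ β, S.G α β) where
  carrier := {g | ∀ (β β' : ℤ) (h : β ≤ β'), S.π α h (g β') = g β}
  add_mem' := by
    intro x y hx hy β β' h
    simp only [Pi.add_apply, map_add, hx β β' h, hy β β' h]
  zero_mem' := by
    intro β β' h
    simp only [Pi.zero_apply, map_zero]
  smul_mem' := by
    intro c x hx β β' h
    simp only [Pi.smul_apply, map_smul, hx β β' h]

/-- The map `lim_β G_β^α → lim_β G_β^{α'}` induced by the `ι`. -/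
noncomputable def lowerLimMap {α α' : ℤ} (h : α ≤ α') : S.lowerLim α →ₗ[ℂ] S.lowerLim α' where
  toFun g := ⟨fun β => S.ι h β (g.val β), by
    intro β β' h'
    rw [← S.square h h' (g.val β'), g.prop β β' h']⟩
  map_add' g g' := by
    apply Subtype.ext
    funext β
    simp [map_add]
  map_smul' c g := by
    apply Subtype.ext
    funext β
    simp [map_smul]

/-- The map `colim_α G_{β'}^α → colim_α G_β^α` induced by the `π`. -/
noncomputable def colimUpperMap {β β' : ℤ} (h : β ≤ β') :
    S.colimUpper β' →ₗ[ℂ] S.colimUpper β :=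
  Module.DirectLimit.lift ℂ ℤ (fun α => S.G α β') (S.fam β')
    (fun α => (S.toColim α β).comp (S.π α h))
    (by
      intro i j hij x
      show S.toColim j β (S.π j h (S.ι hij β' x)) = S.toColim i β (S.π i h x)
      rw [← S.square hij h x]
      exact Module.DirectLimit.of_f)

/-- `lim_β colim_α G_β^α`. -/
noncomputable def limColim : Submodule ℂ (∀ β, S.colimUpper β) where
  carrier := {g | ∀ (β β' : ℤ) (h : β ≤ β'), S.colimUpperMap h (g β') = g β}
  add_mem' := by
    intro x y hx hy β β' h
    simp only [Pi.add_apply, map_add, hx β β' h, hy β β' h]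
  zero_mem' := by
    intro β β' h
    simp only [Pi.zero_apply, map_zero]
  smul_mem' := by
    intro c x hx β β' h
    simp only [Pi.smul_apply, map_smul, hx β β' h]

/-- The map `lim_β G_β^α → lim_β colim_α G_β^α`. -/
noncomputable def lowerLimToLimColim (α : ℤ) : S.lowerLim α →ₗ[ℂ] S.limColim where
  toFun g := ⟨fun β => S.toColim α β (g.val β), by
    intro β β' h
    have h1 : S.colimUpperMap h (S.toColim α β' (g.val β')) =
        (S.toColim α β) (S.π α h (g.val β')) :=
      Module.DirectLimit.lift_of _ _ _
    rw [h1, g.prop β β' h]⟩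
  map_add' g g' := by
    apply Subtype.ext
    funext β
    simp [map_add]
  map_smul' c g := by
    apply Subtype.ext
    funext β
    simp [map_smul]

/-- The canonical interchange map `κ : colim_α lim_β G_β^α → lim_β colim_α G_β^α`. -/
noncomputable def kappa :
    Module.DirectLimit (fun α => S.lowerLim α) (fun _ _ h => S.lowerLimMap h) →ₗ[ℂ]
      S.limColim :=
  Module.DirectLimit.lift ℂ ℤ (fun α => S.lowerLim α) (fun _ _ h => S.lowerLimMap h)
    (fun α => S.lowerLimToLimColim α)
    (by
      intro i j hij g
      apply Subtype.ext
      funext β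
      simp only [lowerLimToLimColim, lowerLimMap, LinearMap.coe_mk, AddHom.coe_mk, toColim]
      exact Module.DirectLimit.of_f (hij := hij))

end BidirectSystem

/-! Injective transition maps make every `G_β^α → colim_α G_β^α` injective, hence also
`lim_β G_β^α → lim_β colim_α G_β^α`; and a map out of a direct limit whose restrictions to all
the terms are injective is itself injective. -/

theorem Module.DirectLimit.of_injective {R ι : Type*} [Semiring R] [Preorder ι] [DecidableEq ι]
    [IsDirectedOrder ι] {G : ι → Type*} [∀ i, AddCommMonoid (G i)] [∀ i, Module R (G i)]
    {f : ∀ i j, i ≤ j → G i →ₗ[R] G j} [DirectedSystem G (f · · ·)]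
    (hf : ∀ i j h, Function.Injective (f i j h)) (i : ι) :
    Function.Injective (Module.DirectLimit.of R ι G f i) := fun _ _ h ↦
  let ⟨j, hij, hxy⟩ := Module.DirectLimit.exists_eq_of_of_eq h
  hf i j hij hxy

namespace BidirectSystem

variable (S : BidirectSystem)

instance directedSystem_fam (β : ℤ) : DirectedSystem (fun α ↦ S.G α β) (S.fam β · · ·) where
  map_self _ x := S.ι_id _ _ x
  map_map _ _ _ hij hjk x := S.ι_comp hij hjk β x

theorem toColim_injective
    (hinj : ∀ {α α' : ℤ} (h : α ≤ α') (β : ℤ), Function.Injective (S.ι h β)) (α β : ℤ) : Function.Injective (S.toColim α β) :=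
  Module.DirectLimit.of_injective (f := S.fam β) (fun _ _ h ↦ hinj h β) α

theorem lowerLimToLimColim_injective {α : ℤ} (h : ∀ β, Function.Injective (S.toColim α β)) :
    Function.Injective (S.lowerLimToLimColim α) := fun _ _ hgg' ↦
  Subtype.ext <| funext fun β ↦ h β congr(($hgg').val β)

end BidirectSystem

/-- For a bidirect system of complex vector spaces indexed by `ℤ`, if all the
direct-system maps `ι` are injective, then the canonical interchange map
`κ : colim_α lim_β G → lim_β colim_α G` is injective. -/
theorem kappa_injective_of_iota_injective (S : BidirectSystem)
    (hinj : ∀ {α α' : ℤ} (h : α ≤ α') (β : ℤ), Function.Injective (S.ι h β)) :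
    Function.Injective S.kappa := by
  exact Module.DirectLimit.lift_injective _ _ fun α ↦
    S.lowerLimToLimColim_injective (S.toColim_injective hinj α)
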